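/- Let S be a solution of S' = μN(1-p) - β(t)S f(I) - (μ+r(t))S + δ(N-S-E-I) along a nonnegative solution (S,E,I) of the reduced SEIRS system, and let Ŝ be the positive LT-periodic solution of S' = μN(1-p) - (μ+r(t))S + δ(N-S). Then S(t) - Ŝ(t) ≤ (S(0)-Ŝ(0)) e^{-∫₀ᵗ(μ+r(s)+δ)ds} for all t ≥ 0; in particular limsup_{t→∞}(S(t)-Ŝ(t)) ≤ 0. -/

import Mathlib

/-!
Multiplying the differential inequality for `S - Ŝ` by the integrating factor
`exp (∫₀ᵗ (μ + r + δ))` gives a nonincreasing function: the terms `β S f(I)` and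
`δ (E + I)` that separate the two equations are nonnegative and only push `S` down.
Since `μ + r + δ ≥ μ + δ > 0`, the resulting bound decays to zero.
-/

open Filter Real Set Topology

theorem le_mul_exp_neg_integral_of_hasDerivAt {u u' g : ℝ → ℝ} {a : ℝ} (hg : Continuous g)
    (hu : ∀ t ∈ Ici a, HasDerivAt u (u' t) t) (hu' : ∀ t ∈ Ici a, u' t ≤ -(g t * u t))
    {t : ℝ} (ht : a ≤ t) : u t ≤ u a * exp (-∫ s in a..t, g s) := by
  set R : ℝ → ℝ := fun t => ∫ s in a..t, g s
  have hR : ∀ t, HasDerivAt R (g t) t := fun t => (hg.integral_hasStrictDerivAt a t).hasDerivAt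
  have hv : ∀ t ∈ Ici a, HasDerivAt (fun t => u t * exp (R t))
      ((u' t + g t * u t) * exp (R t)) t := fun t ht =>
    ((hu t ht).mul (hR t).exp).congr_deriv (by ring)
  have hanti : AntitoneOn (fun t => u t * exp (R t)) (Ici a) :=
    antitoneOn_of_hasDerivWithinAt_nonpos (convex_Ici a)
      (fun t ht => (hv t ht).continuousAt.continuousWithinAt)
      (fun t ht => (hv t (interior_subset ht)).hasDerivWithinAt)
      (fun t ht => mul_nonpos_of_nonpos_of_nonneg
        (by linarith [hu' t (interior_subset ht)]) (exp_pos _).le)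
  have hmono := hanti self_mem_Ici ht ht
  simp only [R, intervalIntegral.integral_same, exp_zero, mul_one] at hmono
  rwa [exp_neg, ← div_eq_mul_inv, le_div_iff₀ (exp_pos _)]

theorem tendsto_intervalIntegral_atTop_of_le {g : ℝ → ℝ} {c : ℝ} (a : ℝ) (hc : 0 < c)
    (hg : Continuous g) (hcg : ∀ s, c ≤ g s) :
    Tendsto (fun t => ∫ s in a..t, g s) atTop atTop := by
  have hlin : Tendsto (fun t => c * (t - a)) atTop atTop :=
    (tendsto_atTop_add_const_right _ (-a) tendsto_id).const_mul_atTop hc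
  refine tendsto_atTop_mono' _ (eventually_ge_atTop a |>.mono fun t ht => ?_) hlin
  have := intervalIntegral.integral_mono_on ht (intervalIntegrable_const (μ := MeasureTheory.volume))
    (hg.intervalIntegrable a t) fun s _ => hcg s
  rwa [intervalIntegral.integral_const, smul_eq_mul, mul_comm] at this

theorem Real.limsup_nonpos_of_eventually_le_of_tendsto {ι : Type*} {l : Filter ι} [NeBot l]
    {u b : ι → ℝ} (hub : ∀ᶠ i in l, u i ≤ b i) (hb : Tendsto b l (𝓝 0)) : limsup u l ≤ 0 := by
  by_cases hcob : l.IsCoboundedUnder (· ≤ ·) u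
  · exact (limsup_le_limsup hub hcob hb.isBoundedUnder_le).trans hb.limsup_eq.le
  · rw [Real.limsup_of_not_isCoboundedUnder hcob]

theorem stmt_10_general (μ δ N p : ℝ) (β r : ℝ → ℝ) (f : ℝ → ℝ)
    (hμ : μ > 0) (hδ : δ > 0)
    (hβpos : ∀ t, β t > 0)
    (hr : Continuous r) (hrpos : ∀ t, r t > 0)
    (hf : ∀ x : ℝ, 0 ≤ x → 0 ≤ f x)
    (S E I : ℝ → ℝ)
    (hSnn : ∀ t, 0 ≤ S t) (hEnn : ∀ t, 0 ≤ E t) (hInn : ∀ t, 0 ≤ I t)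
    (hS : ∀ t ∈ Set.Ici (0:ℝ), HasDerivAt S
      (μ * N * (1 - p) - β t * S t * f (I t) - (μ + r t) * S t
        + δ * (N - S t - E t - I t)) t)
    (Shat : ℝ → ℝ)
    (hShat : ∀ t : ℝ, HasDerivAt Shat
      (μ * N * (1 - p) - (μ + r t) * Shat t + δ * (N - Shat t)) t) :
    (∀ t : ℝ, 0 ≤ t →
      S t - Shat t ≤ (S 0 - Shat 0) * Real.exp (-(∫ s in (0:ℝ)..t, (μ + r s + δ)))) ∧
    Filter.limsup (fun t => S t - Shat t) Filter.atTop ≤ 0 := by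
  have hg : Continuous fun s => μ + r s + δ := by fun_prop
  have hbound : ∀ t : ℝ, 0 ≤ t →
      S t - Shat t ≤ (S 0 - Shat 0) * exp (-∫ s in (0:ℝ)..t, (μ + r s + δ)) := by
    refine fun t ht => le_mul_exp_neg_integral_of_hasDerivAt hg
      (fun t ht => (hS t ht).sub (hShat t)) (fun t ht => ?_) ht
    have hinf : 0 ≤ β t * S t * f (I t) :=
      mul_nonneg (mul_nonneg (hβpos t).le (hSnn t)) (hf _ (hInn t))
    simp only [Pi.sub_apply]
    nlinarith [hEnn t, hInn t]
  refine ⟨hbound, Real.limsup_nonpos_of_eventually_le_of_tendsto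
    (eventually_atTop.2 ⟨0, hbound⟩) ?_⟩
  have hint := tendsto_intervalIntegral_atTop_of_le 0 (add_pos hμ hδ) hg
    fun s => by linarith [hrpos s]
  simpa using (tendsto_exp_atBot.comp (tendsto_neg_atTop_atBot.comp hint)).const_mul
    (S 0 - Shat 0)

theorem stmt_10 (μ σ γ δ N p : ℝ) (β r : ℝ → ℝ) (f : ℝ → ℝ)
    (hμ : μ > 0) (hσ : σ > 0) (hγ : γ > 0) (hδ : δ > 0) (hN : N > 0)
    (hp : 0 ≤ p ∧ p ≤ 1)
    (hβ : Continuous β) (hβpos : ∀ t, β t > 0)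
    (hr : Continuous r) (hrpos : ∀ t, r t > 0)
    (hf : ∀ x : ℝ, 0 ≤ x → 0 ≤ f x)
    (S E I : ℝ → ℝ)
    (hSnn : ∀ t, 0 ≤ S t) (hEnn : ∀ t, 0 ≤ E t) (hInn : ∀ t, 0 ≤ I t)
    (hS : ∀ t ∈ Set.Ici (0:ℝ), HasDerivAt S
      (μ * N * (1 - p) - β t * S t * f (I t) - (μ + r t) * S t
        + δ * (N - S t - E t - I t)) t)
    (hE : ∀ t ∈ Set.Ici (0:ℝ), HasDerivAt E
      (β t * S t * f (I t) - (μ + σ) * E t) t)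
    (hI : ∀ t ∈ Set.Ici (0:ℝ), HasDerivAt I
      (σ * E t - (μ + γ) * I t) t)
    (Shat : ℝ → ℝ)
    (hShat : ∀ t : ℝ, HasDerivAt Shat
      (μ * N * (1 - p) - (μ + r t) * Shat t + δ * (N - Shat t)) t)
    (hShatpos : ∀ t, Shat t > 0) :
    (∀ t : ℝ, 0 ≤ t →
      S t - Shat t ≤ (S 0 - Shat 0) * Real.exp (-(∫ s in (0:ℝ)..t, (μ + r s + δ)))) ∧
    Filter.limsup (fun t => S t - Shat t) Filter.atTop ≤ 0 :=
  stmt_10_general μ δ N p β r f hμ hδ hβpos hr hrpos hf S E I hSnn hEnn hInn hS Shat hShat
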